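/- Let f : X → Y be a map of finite sets and, for each i ≥ 0, let ν(f)_i := #{y ∈ Y : #f⁻¹(y) = i}, which defines a generalized integer partition ν(f). Then the automorphism group of f in the category of maps of finite sets — that is, the group of pairs (σ, τ) with σ a permutation of X and τ a permutation of Y satisfying f ∘ σ = τ ∘ f, under componentwise composition — is isomorphic as a group to 𝕊_{ν(f)} = ∏_{i≥0} S_i ≀ S_{ν(f)_i}. -/

import Mathlib

attribute [local instance] Classical.propDecidable

noncomputable section

/-- A generalized integer partition: a finitely supported function `ℕ → ℕ`,
where `ν i` is the number of parts of size `i`. -/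
abbrev GenPart : Type := ℕ →₀ ℕ

/-- The size `|ν| = ∑ i·νᵢ` of a generalized partition. -/
def GenPart.size (ν : GenPart) : ℕ := ν.sum fun i c => i * c

/-- The permutation action of `S_n` on `n`-tuples of elements of `G`. -/
def permMulAut (G : Type*) [Group G] (n : ℕ) : Equiv.Perm (Fin n) →* MulAut (Fin n → G) where
  toFun σ :=
    { toFun := fun f => f ∘ σ.symm
      invFun := fun f => f ∘ σ
      left_inv := fun f => by funext i; simp
      right_inv := fun f => by funext i; simp
      map_mul' := fun f g => rfl }
  map_one' := by ext f i; rfl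
  map_mul' := by intro σ τ; ext f i; rfl

/-- The wreath product `G ≀ Sₙ = Gⁿ ⋊ Sₙ`, where `Sₙ` permutes the coordinates of `Gⁿ`. -/
abbrev GWreath (G : Type*) [Group G] (n : ℕ) :=
  (Fin n → G) ⋊[permMulAut G n] Equiv.Perm (Fin n)

/-- The wreath product `S_m ≀ S_n`. -/
abbrev Wreath (m n : ℕ) := GWreath (Equiv.Perm (Fin m)) n

/-- The group `𝕊_ν = ∏ᵢ Sᵢ ≀ S_{νᵢ}` attached to a generalized partition `ν`. -/
abbrev SGroup (ν : GenPart) := ∀ i : ℕ, Wreath i (ν i)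

/-- The automorphism group of a map of finite sets `f : X → Y`, namely the group of pairs
`(σ, τ)` of permutations of `X` and `Y` with `f ∘ σ = τ ∘ f`, as a subgroup of
`Perm X × Perm Y` (with componentwise composition). -/
def mapAut {X Y : Type} (f : X → Y) : Subgroup (Equiv.Perm X × Equiv.Perm Y) where
  carrier := {p | ∀ x, f (p.1 x) = p.2 (f x)}
  one_mem' := fun _ => rfl
  mul_mem' := by
    intro p q hp hq x
    show f (p.1 (q.1 x)) = p.2 (q.2 (f x))
    rw [hp (q.1 x), hq x]
  inv_mem' := by
    intro p hp x
    show f (p.1⁻¹ x) = p.2⁻¹ (f x)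
    have h1 := hp (p.1⁻¹ x)
    rw [← Equiv.Perm.mul_apply, mul_inv_cancel, Equiv.Perm.one_apply] at h1
    rw [h1, ← Equiv.Perm.mul_apply, inv_mul_cancel, Equiv.Perm.one_apply]

/-- The generalized partition `ν(f)` of a map of finite sets, where `ν(f)ᵢ` is the number
of points of `Y` whose fiber has exactly `i` elements. -/
def nuMap {X Y : Type} [Fintype X] [Fintype Y] (f : X → Y) : GenPart :=
  Finsupp.onFinset (Finset.range (Fintype.card X + 1))
    (fun i => (Finset.univ.filter fun y : Y =>
      (Finset.univ.filter fun x : X => f x = y).card = i).card)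
    (by
      intro i hi
      rw [Finset.mem_range, Nat.lt_succ_iff]
      obtain ⟨y, hy⟩ := Finset.card_ne_zero.mp hi
      rw [Finset.mem_filter] at hy
      calc i = (Finset.univ.filter fun x : X => f x = y).card := hy.2.symm
        _ ≤ (Finset.univ : Finset X).card := Finset.card_filter_le _ _
        _ = Fintype.card X := Finset.card_univ)

namespace AutWreathAux

open Equiv

variable (ν : ℕ → ℕ)

/-- The standard codomain attached to `ν`. -/
abbrev Y0 := Σ i : ℕ, Fin (ν i)

/-- The standard domain attached to `ν`. -/
abbrev X0 := Σ i : ℕ, Fin (ν i) × Fin i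

/-- The standard map attached to `ν`. -/
def f0 : X0 ν → Y0 ν := fun p => ⟨p.1, p.2.1⟩

lemma Y_reconstruct (s : Y0 ν) (i : ℕ) (h : s.1 = i) (pr : ν s.1 = ν i) :
    (⟨i, Fin.cast pr s.2⟩ : Y0 ν) = s := by
  obtain ⟨i', j'⟩ := s
  cases h
  exact congrArg (Sigma.mk i') (Fin.ext rfl)

lemma Y_cast_eq (s : Y0 ν) (i : ℕ) (j : Fin (ν i)) (h : s = ⟨i, j⟩)
    (pr : ν s.1 = ν i) : Fin.cast pr s.2 = j := by
  subst h; exact Fin.ext rfl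

lemma X_reconstruct (u : X0 ν) (i : ℕ) (j : Fin (ν i)) (h : f0 ν u = ⟨i, j⟩)
    (pr : u.1 = i) : u = ⟨i, (j, Fin.cast pr u.2.2)⟩ := by
  obtain ⟨i', j', k'⟩ := u
  have hi : i' = i := congrArg Sigma.fst h
  subst hi
  have hj : j' = j := by
    have h2 : (Sigma.mk i' j' : Y0 ν) = ⟨i', j⟩ := h
    simpa using h2
  subst hj
  have : Fin.cast pr k' = k' := Fin.ext rfl
  rw [this]

lemma X_cast_eq (u : X0 ν) (i : ℕ) (j : Fin (ν i)) (k : Fin i)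
    (h : u = ⟨i, (j, k)⟩) (pr : u.1 = i) : Fin.cast pr u.2.2 = k := by
  subst h; exact Fin.ext rfl

/-- The fiber of the standard map over `b` has exactly `b.1` elements. -/
def fibEquiv (b : Y0 ν) : {u : X0 ν // f0 ν u = b} ≃ Fin b.1 where
  toFun u := Fin.cast (congrArg Sigma.fst u.2) u.1.2.2
  invFun k := ⟨⟨b.1, (b.2, k)⟩, Sigma.eta b⟩
  left_inv u := Subtype.ext
    (X_reconstruct ν u.1 b.1 b.2 (u.2.trans (Sigma.eta b).symm) _).symm
  right_inv k := Fin.ext rfl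

lemma fst_preserved {p : Perm (X0 ν) × Perm (Y0 ν)} (hp : p ∈ mapAut (f0 ν))
    (b : Y0 ν) : (p.2 b).1 = b.1 := by
  have hq := (mapAut (f0 ν)).inv_mem hp
  have e1 : {u : X0 ν // f0 ν u = b} ≃ {u : X0 ν // f0 ν u = p.2 b} :=
    { toFun := fun u => ⟨p.1 u.1, by rw [hp u.1, u.2]⟩
      invFun := fun u => ⟨(p⁻¹).1 u.1, by
        rw [hq u.1, u.2]; exact Equiv.symm_apply_apply _ _⟩
      left_inv := fun u => Subtype.ext (Equiv.symm_apply_apply _ _)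
      right_inv := fun u => Subtype.ext (Equiv.apply_symm_apply _ _) }
  exact (Fin.equiv_iff_eq.mp
    ⟨(fibEquiv ν b).symm.trans (e1.trans (fibEquiv ν (p.2 b)))⟩).symm

/-- The raw pair of permutations attached to an element of `∏ᵢ Sᵢ ≀ S_{νᵢ}`. -/
def psiPair (x : ∀ i, Wreath i (ν i)) : Perm (X0 ν) × Perm (Y0 ν) :=
  (Equiv.sigmaCongrRight fun i =>
      Equiv.prodShear ((x i).right) (fun j => ((x i).left ((x i).right j))),
   Equiv.sigmaCongrRight fun i => ((x i).right))

lemma psiPair_mem (x : ∀ i, Wreath i (ν i)) : psiPair ν x ∈ mapAut (f0 ν) :=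
  fun _ => rfl

/-- The homomorphism `∏ᵢ Sᵢ ≀ S_{νᵢ} →* Aut(f₀)`. -/
def Psi : (∀ i, Wreath i (ν i)) →* ↥(mapAut (f0 ν)) where
  toFun x := ⟨psiPair ν x, psiPair_mem ν x⟩
  map_one' := by
    apply Subtype.ext
    apply Prod.ext <;>
      · apply Equiv.ext; rintro ⟨i, a⟩; rfl
  map_mul' x y := by
    apply Subtype.ext
    apply Prod.ext
    · apply Equiv.ext; rintro ⟨i, j, k⟩
      show (⟨i, (((x i).right) (((y i).right) j),
          ((x i).left (((x i).right) (((y i).right) j)))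
            (((y i).left (((x i).right.symm) (((x i).right) (((y i).right) j)))) k))⟩ : X0 ν)
        = ⟨i, (((x i).right) (((y i).right) j),
          ((x i).left (((x i).right) (((y i).right) j)))
            (((y i).left (((y i).right) j)) k))⟩
      rw [Equiv.symm_apply_apply]
    · apply Equiv.ext; rintro ⟨i, j⟩; rfl

lemma psi_injective : Function.Injective (Psi ν) := by
  intro x y h
  have h1 : psiPair ν x = psiPair ν y := congrArg Subtype.val h
  have hσ := congrArg Prod.fst h1
  have hτ := congrArg Prod.snd h1
  funext i
  have hr : (x i).right = (y i).right := by
    apply Equiv.ext; intro j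
    have h2 : (Sigma.mk i ((x i).right j) : Y0 ν) = ⟨i, (y i).right j⟩ :=
      congrArg (fun e : Perm (Y0 ν) => e ⟨i, j⟩) hτ
    simpa using h2
  refine SemidirectProduct.ext ?_ hr
  funext j
  apply Equiv.ext; intro k
  have h2 : (Sigma.mk i ((x i).right ((x i).right.symm j),
        ((x i).left ((x i).right ((x i).right.symm j))) k) : X0 ν) =
      ⟨i, ((y i).right ((x i).right.symm j),
        ((y i).left ((y i).right ((x i).right.symm j))) k)⟩ :=
    congrArg (fun e : Perm (X0 ν) => e ⟨i, ((x i).right.symm j, k)⟩) hσ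
  rw [← hr, Equiv.apply_symm_apply] at h2
  have h3 : ((j, ((x i).left j) k) : Fin (ν i) × Fin i) = (j, ((y i).left j) k) :=
    @sigma_mk_injective ℕ (fun i => Fin (ν i) × Fin i) i _ _ h2
  simpa using congrArg Prod.snd h3

lemma psi_surjective : Function.Surjective (Psi ν) := by
  rintro ⟨⟨σ, τ⟩, hp⟩
  have hτ : ∀ b : Y0 ν, (τ b).1 = b.1 := fst_preserved ν hp
  have hp' := (mapAut (f0 ν)).inv_mem hp
  have hτ' : ∀ b : Y0 ν, (τ⁻¹ b).1 = b.1 := fst_preserved ν hp'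
  -- the base permutations
  set π : ∀ i, Perm (Fin (ν i)) := fun i =>
    { toFun := fun j => Fin.cast (congrArg ν (hτ ⟨i, j⟩)) (τ ⟨i, j⟩).2
      invFun := fun j => Fin.cast (congrArg ν (hτ' ⟨i, j⟩)) (τ⁻¹ ⟨i, j⟩).2
      left_inv := by
        intro j
        apply Y_cast_eq
        rw [Y_reconstruct ν (τ ⟨i, j⟩) i (hτ ⟨i, j⟩) (congrArg ν (hτ ⟨i, j⟩))]
        exact Equiv.symm_apply_apply τ _
      right_inv := by
        intro j
        apply Y_cast_eq
        rw [Y_reconstruct ν (τ⁻¹ ⟨i, j⟩) i (hτ' ⟨i, j⟩) (congrArg ν (hτ' ⟨i, j⟩))]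
        exact Equiv.apply_symm_apply τ _ } with hπ
  set x₀ : ∀ i, Wreath i (ν i) := fun i => SemidirectProduct.inr (π i) with hx₀
  set P : ↥(mapAut (f0 ν)) := ⟨(σ, τ), hp⟩ with hP
  have hPsix0 : ((Psi ν x₀ : ↥(mapAut (f0 ν))) : Perm (X0 ν) × Perm (Y0 ν)).2 = τ := by
    apply Equiv.ext; rintro ⟨i, j⟩
    exact Y_reconstruct ν (τ ⟨i, j⟩) i (hτ _) (congrArg ν (hτ ⟨i, j⟩))
  set Q : ↥(mapAut (f0 ν)) := P * (Psi ν x₀)⁻¹ with hQdef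
  have hQ2 : ((Q : ↥(mapAut (f0 ν))) : Perm (X0 ν) × Perm (Y0 ν)).2 = 1 := by
    have : ((Q : ↥(mapAut (f0 ν))) : Perm (X0 ν) × Perm (Y0 ν)) =
        (σ, τ) * (psiPair ν x₀)⁻¹ := rfl
    rw [this]
    show τ * (psiPair ν x₀).2⁻¹ = 1
    rw [show (psiPair ν x₀).2 = τ from hPsix0]
    exact mul_inv_cancel τ
  set ρ : Perm (X0 ν) := ((Q : ↥(mapAut (f0 ν))) : Perm (X0 ν) × Perm (Y0 ν)).1 with hρdef
  have hρ : ∀ u, f0 ν (ρ u) = f0 ν u := by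
    intro u
    have := Q.2 u
    rw [hQ2] at this
    simpa using this
  have hρ' : ∀ u, f0 ν (ρ⁻¹ u) = f0 ν u := by
    intro u
    have hmem := (mapAut (f0 ν)).inv_mem Q.2
    have := hmem u
    show f0 ν ((Q : Perm (X0 ν) × Perm (Y0 ν))⁻¹.1 u) = f0 ν u
    rw [this]
    show ((Q : Perm (X0 ν) × Perm (Y0 ν)).2)⁻¹ (f0 ν u) = f0 ν u
    rw [hQ2]
    simp
  -- fiberwise permutations
  set g : ∀ i, Fin (ν i) → Perm (Fin i) := fun i j =>
    { toFun := fun k => Fin.cast (congrArg Sigma.fst (hρ ⟨i, (j, k)⟩)) (ρ ⟨i, (j, k)⟩).2.2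
      invFun := fun k => Fin.cast (congrArg Sigma.fst (hρ' ⟨i, (j, k)⟩)) (ρ⁻¹ ⟨i, (j, k)⟩).2.2
      left_inv := by
        intro k
        apply X_cast_eq
        beta_reduce
        erw [← X_reconstruct ν (ρ ⟨i, (j, k)⟩) i j (hρ ⟨i, (j, k)⟩) (congrArg Sigma.fst (hρ ⟨i, (j, k)⟩))]
        exact Equiv.symm_apply_apply ρ _
      right_inv := by
        intro k
        apply X_cast_eq
        beta_reduce
        erw [← X_reconstruct ν (ρ⁻¹ ⟨i, (j, k)⟩) i j (hρ' ⟨i, (j, k)⟩) (congrArg Sigma.fst (hρ' ⟨i, (j, k)⟩))]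
        exact Equiv.apply_symm_apply ρ _ } with hg
  set x₁ : ∀ i, Wreath i (ν i) := fun i => SemidirectProduct.inl (g i) with hx₁
  have hx₁Q : Psi ν x₁ = Q := by
    apply Subtype.ext
    apply Prod.ext
    · apply Equiv.ext; rintro ⟨i, j, k⟩
      exact (X_reconstruct ν (ρ ⟨i, (j, k)⟩) i j (hρ ⟨i, (j, k)⟩)
        (congrArg Sigma.fst (hρ ⟨i, (j, k)⟩))).symm
    · rw [hQ2]
      apply Equiv.ext; rintro ⟨i, j⟩
      rfl
  refine ⟨x₁ * x₀, ?_⟩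
  rw [map_mul, hx₁Q, hQdef, inv_mul_cancel_right]

/-- `Aut(f)` is invariant under conjugating `f` by equivalences. -/
def mapAutCongr {X X' Y Y' : Type} {f : X → Y} {f' : X' → Y'}
    (eX : X ≃ X') (eY : Y ≃ Y') (h : ∀ x, f' (eX x) = eY (f x)) :
    ↥(mapAut f) ≃* ↥(mapAut f') := by
  have h' : ∀ x', f (eX.symm x') = eY.symm (f' x') := by
    intro x'
    conv_rhs => rw [← eX.apply_symm_apply x', h, eY.symm_apply_apply]
  exact
  { toFun := fun p => ⟨(eX.permCongr p.1.1, eY.permCongr p.1.2), by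
      intro x'
      simp only [Equiv.permCongr_apply]
      rw [h, p.2 (eX.symm x'), h']⟩
    invFun := fun p => ⟨(eX.symm.permCongr p.1.1, eY.symm.permCongr p.1.2), by
      intro x
      simp only [Equiv.permCongr_apply, Equiv.symm_symm]
      rw [h' (p.1.1 (eX x)), p.2 (eX x), h]⟩
    left_inv := fun p => by
      apply Subtype.ext
      apply Prod.ext <;> (apply Equiv.ext; intro a; simp)
    right_inv := fun p => by
      apply Subtype.ext
      apply Prod.ext <;> (apply Equiv.ext; intro a; simp)
    map_mul' := fun p q => by
      apply Subtype.ext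
      apply Prod.ext <;> (apply Equiv.ext; intro a; simp) }

end AutWreathAux

/-- For a map of finite sets `f : X → Y`, the automorphism group of `f`
in the category of maps of finite sets is isomorphic, as a group, to
`𝕊_{ν(f)} = ∏ᵢ Sᵢ ≀ S_{ν(f)ᵢ}`. -/
theorem aut_of_map_iso_wreath {X Y : Type} [Fintype X] [Fintype Y] (f : X → Y) :
    Nonempty (↥(mapAut f) ≃* SGroup (nuMap f)) := by
  classical
  set n : Y → ℕ := fun y => Fintype.card {x // f x = y} with hn
  have hcard : ∀ i, Fintype.card {y // n y = i} = nuMap f i := by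
    intro i
    rw [Fintype.card_subtype]
    show _ = (Finset.univ.filter fun y : Y =>
      (Finset.univ.filter fun x : X => f x = y).card = i).card
    congr 1
    ext y
    simp [hn, Fintype.card_subtype]
  let c : ∀ i, {y // n y = i} ≃ Fin (nuMap f i) := fun i =>
    Fintype.equivFinOfCardEq (hcard i)
  let eY : Y ≃ AutWreathAux.Y0 (nuMap f) :=
    (Equiv.sigmaFiberEquiv n).symm.trans (Equiv.sigmaCongrRight c)
  let eF : ∀ y : Y, {x // f x = y} ≃ Fin ((eY y).1) := fun y =>
    Fintype.equivFinOfCardEq rfl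
  let e1 : X ≃ Σ y : Y, {x // f x = y} := (Equiv.sigmaFiberEquiv f).symm
  let e2 : (Σ y : Y, {x // f x = y}) ≃ Σ b : AutWreathAux.Y0 (nuMap f), Fin b.1 :=
    Equiv.sigmaCongr eY eF
  let e3 : (Σ b : AutWreathAux.Y0 (nuMap f), Fin b.1) ≃ AutWreathAux.X0 (nuMap f) :=
    (Equiv.sigmaAssoc fun i (_ : Fin (nuMap f i)) => Fin i).trans
      (Equiv.sigmaCongrRight fun i => Equiv.sigmaEquivProd (Fin (nuMap f i)) (Fin i))
  let eX : X ≃ AutWreathAux.X0 (nuMap f) := e1.trans (e2.trans e3)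
  have hcompat : ∀ x, AutWreathAux.f0 (nuMap f) (eX x) = eY (f x) := by
    intro x
    show (⟨(eY (f x)).1, (eY (f x)).2⟩ : AutWreathAux.Y0 (nuMap f)) = eY (f x)
    exact Sigma.eta _
  exact ⟨(AutWreathAux.mapAutCongr eX eY hcompat).trans
    (MulEquiv.ofBijective (AutWreathAux.Psi (nuMap f))
      ⟨AutWreathAux.psi_injective _, AutWreathAux.psi_surjective _⟩).symm⟩

end
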